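/- Let (A, q) be a metric group of exponent n. Then A is generated by its isotropic elements if and only if (i) q^n = 1 (i.e., q(x)^n = 1 for all x), and (ii) (A, q) contains a metric subgroup isomorphic to the hyperbolic metric group (Z/nZ × Z/nZ, h) where h(x,y) = ζ^{xy} for a primitive n-th root of unity ζ. -/

import Mathlib

/-- The bilinear form associated to a quadratic form `q : A → kˣ`. -/
def Bform {A k : Type*} [AddCommGroup A] [Field k] (q : A → kˣ) (x y : A) : kˣ :=
  q (x + y) * (q x * q y)⁻¹

/-- `q : A → kˣ` is a quadratic form: `q(-x) = q(x)` and its associated form is bilinear. -/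
def IsQuadraticForm {A k : Type*} [AddCommGroup A] [Field k] (q : A → kˣ) : Prop :=
  (∀ x, q (-x) = q x) ∧ ∀ x y z, Bform q (x + y) z = Bform q x z * Bform q y z

/-- Non-degeneracy of the bilinear form associated to `q`. -/
def Nondeg {A k : Type*} [AddCommGroup A] [Field k] (q : A → kˣ) : Prop :=
  ∀ x, (∀ y, Bform q x y = 1) → x = 0

/-!
Write `B` for `Bform q` and `n` for the exponent. Since `B` is bilinear with `B ^ n = 1`,
the map `x ↦ q x ^ n` is a character, so it is trivial once isotropic elements generate.
Orders of isotropic elements are closed under `lcm`: coprime parts of isotropic elements are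
orthogonal, so their sum is isotropic. Hence some isotropic `x` has order `n`, non-degeneracy
gives `y₀` with `B x y₀` a primitive `n`-th root `ζ`, and shifting `y₀` by a multiple of `x`
makes it isotropic; `x, y` then span a hyperbolic plane. Conversely, for a hyperbolic pair
`e₁, e₂` every element is `h + w` with `h ∈ ⟨e₁, e₂⟩` and `w ⊥ e₁, e₂`; if `q w = ζ ^ t`, then
`w + e₂ + (n - t) • e₁` is isotropic.
-/

namespace IsPrimitiveRoot

variable {M : Type*} [CommMonoid M] {ζ : M} {n : ℕ}

theorem eq_zero_of_pow_val_eq_one [NeZero n] (hζ : IsPrimitiveRoot ζ n) {j : ZMod n}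
    (h : ζ ^ j.val = 1) : j = 0 :=
  (ZMod.val_eq_zero j).mp (Nat.eq_zero_of_dvd_of_lt (hζ.dvd_of_pow_eq_one _ h) (ZMod.val_lt j))

theorem pow_val_mul_val (hζ : IsPrimitiveRoot ζ n) (a b : ZMod n) :
    ζ ^ (a.val * b.val) = ζ ^ (a * b).val := by
  obtain rfl := hζ.eq_orderOf
  rw [ZMod.val_mul, pow_mod_orderOf]

theorem pow_val_one (hζ : IsPrimitiveRoot ζ n) : ζ ^ (1 : ZMod n).val = ζ := by
  obtain rfl := hζ.eq_orderOf
  rw [ZMod.val_one_eq_one_mod, pow_mod_orderOf, pow_one]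

end IsPrimitiveRoot

def zmodHom {A : Type*} [AddCommGroup A] {n : ℕ} {x : A} (hx : n • x = 0) : ZMod n →+ A :=
  ZMod.lift n ⟨zmultiplesHom A x, by simpa using hx⟩

theorem zmodHom_apply {A : Type*} [AddCommGroup A] {n : ℕ} [NeZero n] {x : A}
    (hx : n • x = 0) (j : ZMod n) : zmodHom hx j = j.val • x := by
  conv_lhs => rw [← ZMod.natCast_zmod_val j, ← Int.cast_natCast]
  rw [zmodHom, ZMod.lift_coe, zmultiplesHom_apply, natCast_zsmul]

section QuadraticForm

variable {A k : Type*} [AddCommGroup A] [Field k] {q : A → kˣ}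

theorem bform_comm (q : A → kˣ) (x y : A) : Bform q x y = Bform q y x := by
  rw [Bform, Bform, add_comm, mul_comm (q x)]

theorem map_add_eq_mul_bform (q : A → kˣ) (x y : A) : q (x + y) = q x * q y * Bform q x y := by
  rw [Bform, mul_left_comm, mul_inv_cancel, mul_one]

theorem isotropic_mem_closure {x : A} (hx : q x = 1) :
    x ∈ AddSubgroup.closure {x : A | q x = 1} :=
  AddSubgroup.subset_closure hx

namespace IsQuadraticForm

theorem bform_add_left (hq : IsQuadraticForm q) (x y z : A) :
    Bform q (x + y) z = Bform q x z * Bform q y z :=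
  hq.2 x y z

theorem bform_add_right (hq : IsQuadraticForm q) (x y z : A) :
    Bform q x (y + z) = Bform q x y * Bform q x z := by
  rw [bform_comm, hq.bform_add_left, bform_comm q y, bform_comm q z]

theorem bform_zero_left (hq : IsQuadraticForm q) (y : A) : Bform q 0 y = 1 := by
  simpa using hq.bform_add_left 0 0 y

theorem bform_zero_right (hq : IsQuadraticForm q) (x : A) : Bform q x 0 = 1 := by
  rw [bform_comm, hq.bform_zero_left]

theorem map_zero (hq : IsQuadraticForm q) : q 0 = 1 := by
  simpa [hq.bform_zero_left] using map_add_eq_mul_bform q 0 0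

theorem bform_neg_right (hq : IsQuadraticForm q) (x y : A) :
    Bform q x (-y) = (Bform q x y)⁻¹ := by
  rw [eq_inv_iff_mul_eq_one, mul_comm, ← hq.bform_add_right, add_neg_cancel, hq.bform_zero_right]

theorem bform_neg_left (hq : IsQuadraticForm q) (x y : A) :
    Bform q (-x) y = (Bform q x y)⁻¹ := by
  rw [bform_comm, hq.bform_neg_right, bform_comm]

theorem bform_self (hq : IsQuadraticForm q) (x : A) : Bform q x x = q x ^ 2 := by
  have h := map_add_eq_mul_bform q x (-x)
  rw [add_neg_cancel, hq.map_zero, hq.1, hq.bform_neg_right, eq_comm, mul_inv_eq_one] at h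
  rw [← h, sq]

theorem bform_self_eq_one (hq : IsQuadraticForm q) {x : A} (hx : q x = 1) : Bform q x x = 1 := by
  rw [hq.bform_self, hx, one_pow]

theorem bform_nsmul_left (hq : IsQuadraticForm q) (m : ℕ) (x y : A) :
    Bform q (m • x) y = Bform q x y ^ m := by
  induction m with
  | zero => simpa using hq.bform_zero_left y
  | succ m ih => rw [succ_nsmul, hq.bform_add_left, ih, pow_succ]

theorem bform_nsmul_right (hq : IsQuadraticForm q) (m : ℕ) (x y : A) :
    Bform q x (m • y) = Bform q x y ^ m := by
  rw [bform_comm, hq.bform_nsmul_left, bform_comm]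

theorem map_nsmul (hq : IsQuadraticForm q) (m : ℕ) (x : A) : q (m • x) = q x ^ (m * m) := by
  induction m with
  | zero => simpa using hq.map_zero
  | succ m ih =>
    rw [succ_nsmul, map_add_eq_mul_bform q, ih, hq.bform_nsmul_left, hq.bform_self, ← pow_mul,
      ← pow_succ, ← pow_add]
    ring_nf

theorem map_add_nsmul_of_map_eq_one (hq : IsQuadraticForm q) {x : A} (hx : q x = 1) (y : A)
    (m : ℕ) : q (y + m • x) = q y * Bform q x y ^ m := by
  rw [map_add_eq_mul_bform q, hq.map_nsmul, hx, one_pow, mul_one, hq.bform_nsmul_right, bform_comm]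

theorem bform_pow_eq_one {n : ℕ} (hq : IsQuadraticForm q) (hn : ∀ x : A, n • x = 0)
    (x y : A) : Bform q x y ^ n = 1 := by
  rw [← hq.bform_nsmul_right, hn, hq.bform_zero_right]

theorem bform_pow_addOrderOf_left (hq : IsQuadraticForm q) (x y : A) :
    Bform q x y ^ addOrderOf x = 1 := by
  rw [← hq.bform_nsmul_left, addOrderOf_nsmul_eq_zero, hq.bform_zero_left]

theorem orderOf_bform_dvd_addOrderOf_left (hq : IsQuadraticForm q) (x y : A) :
    orderOf (Bform q x y) ∣ addOrderOf x :=
  orderOf_dvd_of_pow_eq_one (hq.bform_pow_addOrderOf_left x y)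

theorem bform_eq_one_of_coprime (hq : IsQuadraticForm q) {x y : A}
    (h : (addOrderOf x).Coprime (addOrderOf y)) : Bform q x y = 1 := by
  have hy : orderOf (Bform q x y) ∣ addOrderOf y :=
    bform_comm q x y ▸ hq.orderOf_bform_dvd_addOrderOf_left y x
  rw [← orderOf_eq_one_iff, ← Nat.dvd_one, ← h.gcd_eq_one]
  exact Nat.dvd_gcd (hq.orderOf_bform_dvd_addOrderOf_left x y) hy

theorem map_pow_exponent_eq_one_of_mem_closure (hq : IsQuadraticForm q) {x : A}
    (hx : x ∈ AddSubgroup.closure {x : A | q x = 1}) : q x ^ AddMonoid.exponent A = 1 := by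
  induction hx using AddSubgroup.closure_induction with
  | mem x hx => rw [show q x = 1 from hx, one_pow]
  | zero => rw [hq.map_zero, one_pow]
  | add x y _ _ hx hy =>
    rw [map_add_eq_mul_bform q, mul_pow, mul_pow, hx, hy,
      hq.bform_pow_eq_one AddMonoid.exponent_nsmul_eq_zero, one_mul, one_mul]
  | neg x _ hx => rwa [hq.1]

theorem exists_isotropic_lcm_dvd_addOrderOf [Finite A] (hq : IsQuadraticForm q) {x y : A}
    (hx : q x = 1) (hy : q y = 1) :
    ∃ z, q z = 1 ∧ (addOrderOf x).lcm (addOrderOf y) ∣ addOrderOf z := by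
  set a := addOrderOf x
  set b := addOrderOf y
  have ha : a ≠ 0 := (addOrderOf_pos x).ne'
  have hb : b ≠ 0 := (addOrderOf_pos y).ne'
  -- `a' ∣ a` and `b' ∣ b` are coprime with `a' * b' = lcm a b`
  set a' := a.factorizationLCMLeft b
  set b' := a.factorizationLCMRight b
  set x' := (a / a') • x
  set y' := (b / b') • y
  have hx' : addOrderOf x' = a' :=
    addOrderOf_nsmul_addOrderOf_sub ha (Nat.factorizationLCMLeft_dvd_left a b)
  have hy' : addOrderOf y' = b' :=
    addOrderOf_nsmul_addOrderOf_sub hb (Nat.factorizationLCMRight_dvd_right a b)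
  have hcop : (addOrderOf x').Coprime (addOrderOf y') := by
    rw [hx', hy']; exact Nat.coprime_factorizationLCMLeft_factorizationLCMRight a b
  refine ⟨x' + y', ?_, ?_⟩
  · rw [map_add_eq_mul_bform q, hq.map_nsmul, hq.map_nsmul, hx, hy,
      hq.bform_eq_one_of_coprime hcop]
    simp
  · rw [(AddCommute.all x' y').addOrderOf_add_eq_mul_addOrderOf_of_coprime hcop, hx', hy',
      Nat.factorizationLCMLeft_mul_factorizationLCMRight ha hb]

theorem exists_isotropic_addOrderOf_eq_exponent [Finite A] (hq : IsQuadraticForm q)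
    (hgen : AddSubgroup.closure {x : A | q x = 1} = ⊤) :
    ∃ z, q z = 1 ∧ addOrderOf z = AddMonoid.exponent A := by
  obtain ⟨z, hz, hmax⟩ := Set.exists_max_image {x : A | q x = 1} addOrderOf (Set.toFinite _)
    ⟨0, hq.map_zero⟩
  have hdvd (x : A) (hx : q x = 1) : addOrderOf x ∣ addOrderOf z := by
    obtain ⟨w, hw, hlcm⟩ := hq.exists_isotropic_lcm_dvd_addOrderOf hx hz
    have hle : (addOrderOf x).lcm (addOrderOf z) ≤ addOrderOf z :=
      (Nat.le_of_dvd (addOrderOf_pos w) hlcm).trans (hmax w hw)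
    rw [← Nat.lcm_eq_right_iff_dvd]
    exact hle.antisymm (Nat.le_of_dvd (Nat.lcm_pos (addOrderOf_pos x) (addOrderOf_pos z))
      (Nat.dvd_lcm_right _ _))
  have hkill (x : A) : addOrderOf z • x = 0 := by
    induction hgen ▸ AddSubgroup.mem_top x using AddSubgroup.closure_induction with
    | mem x hx => exact addOrderOf_dvd_iff_nsmul_eq_zero.mp (hdvd x hx)
    | zero => exact nsmul_zero _
    | add x y _ _ hx hy => rw [nsmul_add, hx, hy, add_zero]
    | neg x _ hx => rw [smul_neg, hx, neg_zero]
  exact ⟨z, hz, (AddMonoid.addOrder_dvd_exponent z).antisymm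
    (AddMonoid.exponent_dvd_of_forall_nsmul_eq_zero hkill)⟩

theorem exists_hyperbolic_embedding {n : ℕ} [NeZero n] (hq : IsQuadraticForm q)
    {x y : A} (hx : q x = 1) (hy : q y = 1) (hnx : n • x = 0) (hny : n • y = 0)
    (hxy : IsPrimitiveRoot (Bform q x y) n) :
    ∃ φ : ZMod n × ZMod n →+ A, Function.Injective φ ∧
      ∀ v : ZMod n × ZMod n, q (φ v) = Bform q x y ^ (v.1.val * v.2.val) := by
  set φ := (zmodHom hnx).coprod (zmodHom hny)
  have hφ (v : ZMod n × ZMod n) : φ v = v.1.val • x + v.2.val • y := by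
    simp [φ, zmodHom_apply]
  refine ⟨φ, (injective_iff_map_eq_zero φ).mpr fun v hv => ?_, fun v => ?_⟩
  · have hvx : Bform q x y ^ v.2.val = 1 := by
      rw [← hq.bform_zero_left x, ← hv, hφ, hq.bform_add_left, hq.bform_nsmul_left,
        hq.bform_nsmul_left, hq.bform_self_eq_one hx, bform_comm q y, one_pow, one_mul]
    have hvy : Bform q x y ^ v.1.val = 1 := by
      rw [← hq.bform_zero_left y, ← hv, hφ, hq.bform_add_left, hq.bform_nsmul_left,
        hq.bform_nsmul_left, hq.bform_self_eq_one hy, one_pow, mul_one]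
    exact Prod.ext (hxy.eq_zero_of_pow_val_eq_one hvy) (hxy.eq_zero_of_pow_val_eq_one hvx)
  · rw [hφ, map_add_eq_mul_bform q, hq.map_nsmul, hq.map_nsmul, hx, hy, hq.bform_nsmul_left,
      hq.bform_nsmul_right, ← pow_mul]
    simp only [one_pow, one_mul, mul_comm]

end IsQuadraticForm

theorem Nondeg.exists_orderOf_bform_eq_addOrderOf [Finite A] (hnd : Nondeg q)
    (hq : IsQuadraticForm q) (x : A) : ∃ y, orderOf (Bform q x y) = addOrderOf x := by
  let f : Multiplicative A →* kˣ :=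
    { toFun a := Bform q x a.toAdd
      map_one' := hq.bform_zero_right x
      map_mul' a b := hq.bform_add_right x a.toAdd b.toAdd }
  have : Finite f.range := Set.finite_range f
  obtain ⟨⟨_, y, rfl⟩, hy⟩ := Monoid.exists_orderOf_eq_exponent (G := f.range) .of_finite
  refine ⟨y.toAdd, (hq.orderOf_bform_dvd_addOrderOf_left x _).antisymm ?_⟩
  -- the exponent of the image of `Bform q x` kills `Bform q x`, so it kills `x`
  refine addOrderOf_dvd_of_nsmul_eq_zero (hnd _ fun z => ?_)
  rw [hq.bform_nsmul_left,
    show orderOf (Bform q x y.toAdd) = _ from (Subgroup.orderOf_coe _).trans hy]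
  exact congrArg Subtype.val (Monoid.pow_exponent_eq_one (⟨f (.ofAdd z), z, rfl⟩ : f.range))

namespace IsQuadraticForm

theorem exists_hyperbolic_of_closure_eq_top [Finite A] (hq : IsQuadraticForm q)
    (hnd : Nondeg q) (hgen : AddSubgroup.closure {x : A | q x = 1} = ⊤) :
    ∃ ζ : kˣ, IsPrimitiveRoot ζ (AddMonoid.exponent A) ∧
      ∃ φ : ZMod (AddMonoid.exponent A) × ZMod (AddMonoid.exponent A) →+ A,
        Function.Injective φ ∧ ∀ v, q (φ v) = ζ ^ (v.1.val * v.2.val) := by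
  have : NeZero (AddMonoid.exponent A) := ⟨AddMonoid.exponent_ne_zero_of_finite⟩
  obtain ⟨x, hx, hxn⟩ := hq.exists_isotropic_addOrderOf_eq_exponent hgen
  obtain ⟨y₀, hy₀⟩ := hnd.exists_orderOf_bform_eq_addOrderOf hq x
  have hζ : IsPrimitiveRoot (Bform q x y₀) (AddMonoid.exponent A) :=
    hy₀.trans hxn ▸ IsPrimitiveRoot.orderOf _
  obtain ⟨i, hi, hqy₀⟩ := hζ.eq_pow_of_mem_rootsOfUnity <| (mem_rootsOfUnity _ _).mpr <|
    hq.map_pow_exponent_eq_one_of_mem_closure (hgen ▸ AddSubgroup.mem_top y₀)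
  -- correct `y₀` by a multiple of `x` to make it isotropic without changing `Bform q x y₀`
  set y := y₀ + (AddMonoid.exponent A - i) • x
  have hy : q y = 1 := by
    rw [hq.map_add_nsmul_of_map_eq_one hx, ← hqy₀, ← pow_add, Nat.add_sub_cancel' hi.le,
      hζ.pow_eq_one]
  have hxy : Bform q x y = Bform q x y₀ := by
    rw [hq.bform_add_right, hq.bform_nsmul_right, hq.bform_self_eq_one hx, one_pow, mul_one]
  obtain ⟨φ, hφ, hqφ⟩ := hq.exists_hyperbolic_embedding hx hy
    (AddMonoid.exponent_nsmul_eq_zero x) (AddMonoid.exponent_nsmul_eq_zero y) (hxy ▸ hζ)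
  exact ⟨_, hζ, φ, hφ, hxy ▸ hqφ⟩

theorem mem_closure_of_bform_eq_one {n : ℕ} [NeZero n] (hq : IsQuadraticForm q) {e₁ e₂ w : A}
    (h₁ : q e₁ = 1) (h₂ : q e₂ = 1) (hζ : IsPrimitiveRoot (Bform q e₁ e₂) n)
    (hw₁ : Bform q w e₁ = 1) (hw₂ : Bform q w e₂ = 1) (hw : q w ^ n = 1) :
    w ∈ AddSubgroup.closure {x : A | q x = 1} := by
  obtain ⟨t, ht, hqw⟩ := hζ.eq_pow_of_mem_rootsOfUnity ((mem_rootsOfUnity _ _).mpr hw)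
  set u := e₂ + (n - t) • e₁
  have hu : u ∈ AddSubgroup.closure {x : A | q x = 1} :=
    add_mem (isotropic_mem_closure h₂) (nsmul_mem (isotropic_mem_closure h₁) _)
  have hwu : q (w + u) = 1 := by
    rw [map_add_eq_mul_bform q, hq.map_add_nsmul_of_map_eq_one h₁, h₂, one_mul,
      hq.bform_add_right, hq.bform_nsmul_right, hw₁, hw₂, one_pow, mul_one, mul_one, ← hqw,
      ← pow_add, Nat.add_sub_cancel' ht.le, hζ.pow_eq_one]
  simpa using sub_mem (isotropic_mem_closure hwu) hu

theorem closure_eq_top_of_hyperbolic_pair {n : ℕ} [NeZero n] (hq : IsQuadraticForm q)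
    (hn : ∀ x : A, n • x = 0) (hqn : ∀ x, q x ^ n = 1) {e₁ e₂ : A} (h₁ : q e₁ = 1)
    (h₂ : q e₂ = 1) (hζ : IsPrimitiveRoot (Bform q e₁ e₂) n) :
    AddSubgroup.closure {x : A | q x = 1} = ⊤ := by
  refine (AddSubgroup.eq_top_iff' _).mpr fun x => ?_
  obtain ⟨b, -, hb⟩ := hζ.eq_pow_of_mem_rootsOfUnity <| (mem_rootsOfUnity _ _).mpr <|
    hq.bform_pow_eq_one hn x e₁
  obtain ⟨a, -, ha⟩ := hζ.eq_pow_of_mem_rootsOfUnity <| (mem_rootsOfUnity _ _).mpr <|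
    hq.bform_pow_eq_one hn x e₂
  -- `h` has the same pairings with `e₁, e₂` as `x`, so `x - h` is orthogonal to both
  set h := a • e₁ + b • e₂
  have hh : h ∈ AddSubgroup.closure {x : A | q x = 1} :=
    add_mem (nsmul_mem (isotropic_mem_closure h₁) _)
      (nsmul_mem (isotropic_mem_closure h₂) _)
  have hw₁ : Bform q (x - h) e₁ = 1 := by
    rw [sub_eq_add_neg, hq.bform_add_left, hq.bform_neg_left, hq.bform_add_left,
      hq.bform_nsmul_left, hq.bform_nsmul_left, hq.bform_self_eq_one h₁, bform_comm q e₂,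
      ← hb]
    simp
  have hw₂ : Bform q (x - h) e₂ = 1 := by
    rw [sub_eq_add_neg, hq.bform_add_left, hq.bform_neg_left, hq.bform_add_left,
      hq.bform_nsmul_left, hq.bform_nsmul_left, hq.bform_self_eq_one h₂, ← ha]
    simp
  simpa using add_mem (hq.mem_closure_of_bform_eq_one h₁ h₂ hζ hw₁ hw₂ (hqn _)) hh

end IsQuadraticForm

end QuadraticForm

theorem stmt6_general {k : Type*} [Field k]
    {A : Type*} [AddCommGroup A] [Finite A]
    (q : A → kˣ) (hq : IsQuadraticForm q) (hnd : Nondeg q)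
    (n : ℕ) (hn : AddMonoid.exponent A = n) :
    AddSubgroup.closure {x : A | q x = 1} = ⊤ ↔
      ((∀ x, q x ^ n = 1) ∧
        ∃ ζ : kˣ, IsPrimitiveRoot ζ n ∧
          ∃ φ : ZMod n × ZMod n →+ A, Function.Injective φ ∧
            ∀ v : ZMod n × ZMod n, q (φ v) = ζ ^ (v.1.val * v.2.val)) := by
  subst hn
  have : NeZero (AddMonoid.exponent A) := ⟨AddMonoid.exponent_ne_zero_of_finite⟩
  refine ⟨fun hgen => ⟨fun x => ?_, hq.exists_hyperbolic_of_closure_eq_top hnd hgen⟩, ?_⟩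
  · exact hq.map_pow_exponent_eq_one_of_mem_closure (hgen ▸ AddSubgroup.mem_top x)
  rintro ⟨hqn, ζ, hζ, φ, -, hφ⟩
  have h₁ : q (φ (1, 0)) = 1 := by simp [hφ]
  have h₂ : q (φ (0, 1)) = 1 := by simp [hφ]
  have h₁₂ : Bform q (φ (1, 0)) (φ (0, 1)) = ζ := by
    rw [Bform, ← map_add, Prod.mk_add_mk, add_zero, zero_add, h₁, h₂, hφ,
      hζ.pow_val_mul_val, mul_one, hζ.pow_val_one]
    simp
  exact hq.closure_eq_top_of_hyperbolic_pair AddMonoid.exponent_nsmul_eq_zero hqn h₁ h₂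
    (h₁₂ ▸ hζ)

/-- A metric group `(A, q)` of exponent `n` is generated by its isotropic elements iff
`q^n = 1` and `(A, q)` contains a hyperbolic metric subgroup `(ℤ/n × ℤ/n, h)`. -/
theorem stmt6 {k : Type*} [Field k] [CharZero k] [IsAlgClosed k]
    {A : Type*} [AddCommGroup A] [Finite A]
    (q : A → kˣ) (hq : IsQuadraticForm q) (hnd : Nondeg q)
    (n : ℕ) (hn : AddMonoid.exponent A = n) :
    AddSubgroup.closure {x : A | q x = 1} = ⊤ ↔
      ((∀ x, q x ^ n = 1) ∧
        ∃ ζ : kˣ, IsPrimitiveRoot ζ n ∧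
          ∃ φ : ZMod n × ZMod n →+ A, Function.Injective φ ∧
            ∀ v : ZMod n × ZMod n, q (φ v) = ζ ^ (v.1.val * v.2.val)) :=
  stmt6_general q hq hnd n hn
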